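/- Let U be an interleaved double chain of words and let V = f₁(U) be its f₁-lift. Then V₁V₂V₃V₄ = U₆⁻¹ · (U₈U₁U₂U₃U₄) and V₂V₃V₄V₅ = (U₂U₃U₄U₅U₆) · U₈⁻¹. Consequently, any nonempty balanced subword of U₁U₂U₃U₄ or of U₂U₃U₄U₅ occurs as a subword of a concatenation of four consecutive parts of V. -/

import Mathlib

/-- Letterwise reversal of a word over an alphabet with reversal `inv`. -/
def wrev {A : Type*} (inv : A → A) (W : List A) : List A := (W.map inv).reverse

/-- An interleaved double chain (indices mod 8). -/
def IDC {A : Type*} (inv : A → A) (U : ZMod 8 → List A) : Prop :=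
  ∀ i : ZMod 8, U i ++ U (i + 1) = wrev inv (U (i + 4) ++ U (i + 5))

/-- The `f_k`-lift: for `j ≡ k (mod 4)` replace `U_j` by `(U_{j+3}U_{j+4}U_{j+5})⁻¹`,
and keep the remaining parts. -/
def flift {A : Type*} (inv : A → A) (k : ZMod 8) (U : ZMod 8 → List A) :
    ZMod 8 → List A :=
  fun j =>
    if j = k ∨ j = k + 4 then wrev inv (U (j + 3) ++ U (j + 4) ++ U (j + 5)) else U j

/-- A word is balanced when each letter occurs as often as its reverse, i.e. it is
a permutation of its own reversal. -/
def WBalanced {A : Type*} (inv : A → A) (W : List A) : Prop :=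
  W.Perm (wrev inv W)

/-
Only two parts of `V` change. Reversing the first lifted part splits off `U_{k+5}⁻¹` and leaves
`(U_{k+3}U_{k+4})⁻¹`, which the chain relation turns back into `U_{k+7}U_k`; symmetrically for the
second. Hence both four-part windows of `V` starting at `k` and `k + 1` contain five consecutive
parts of `U`, and with them every subword of four consecutive parts.
-/

section Words

variable {A : Type*} (inv : A → A)

theorem wrev_append (X Y : List A) : wrev inv (X ++ Y) = wrev inv Y ++ wrev inv X := by
  simp [wrev]

variable (k : ZMod 8) (U : ZMod 8 → List A)

theorem flift_self : flift inv k U k = wrev inv (U (k + 3) ++ U (k + 4) ++ U (k + 5)) :=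
  if_pos (Or.inl rfl)

theorem flift_add_four :
    flift inv k U (k + 4) = wrev inv (U (k + 7) ++ U k ++ U (k + 1)) := by
  rw [flift, if_pos (Or.inr rfl), show k + 4 + 3 = k + 7 by grind,
    show k + 4 + 4 = k by grind, show k + 4 + 5 = k + 1 by grind]

theorem flift_add_of_ne {j : ZMod 8} (h₀ : j ≠ 0) (h₄ : j ≠ 4) :
    flift inv k U (k + j) = U (k + j) :=
  if_neg (by simpa [add_eq_left] using And.intro h₀ h₄)

variable {inv U}

theorem IDC.flift_window_self (hU : IDC inv U) :
    flift inv k U k ++ flift inv k U (k + 1) ++ flift inv k U (k + 2) ++ flift inv k U (k + 3) =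
      wrev inv (U (k + 5)) ++ (U (k + 7) ++ U k ++ U (k + 1) ++ U (k + 2) ++ U (k + 3)) := by
  have hchain : wrev inv (U (k + 3) ++ U (k + 4)) = U (k + 7) ++ U k := by
    have := hU (k + 7)
    rwa [show k + 7 + 1 = k by grind, show k + 7 + 4 = k + 3 by grind,
      show k + 7 + 5 = k + 4 by grind, eq_comm] at this
  rw [flift_self, flift_add_of_ne inv k U (by decide) (by decide),
    flift_add_of_ne inv k U (by decide) (by decide),
    flift_add_of_ne inv k U (by decide) (by decide), wrev_append, hchain]
  simp only [List.append_assoc]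

theorem IDC.flift_window_succ (hU : IDC inv U) :
    flift inv k U (k + 1) ++ flift inv k U (k + 2) ++ flift inv k U (k + 3) ++
        flift inv k U (k + 4) =
      (U (k + 1) ++ U (k + 2) ++ U (k + 3) ++ U (k + 4) ++ U (k + 5)) ++ wrev inv (U (k + 7)) := by
  have hchain : wrev inv (U k ++ U (k + 1)) = U (k + 4) ++ U (k + 5) := by
    have := hU (k + 4)
    rwa [show k + 4 + 1 = k + 5 by grind, show k + 4 + 4 = k by grind,
      show k + 4 + 5 = k + 1 by grind, eq_comm] at this
  rw [flift_add_four, flift_add_of_ne inv k U (by decide) (by decide),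
    flift_add_of_ne inv k U (by decide) (by decide),
    flift_add_of_ne inv k U (by decide) (by decide), List.append_assoc (U (k + 7)), wrev_append,
    hchain]
  simp only [List.append_assoc]

end Words

theorem stmt15_general {A : Type*} (inv : A → A)
    (U : ZMod 8 → List A) (hU : IDC inv U) :
    ∀ V : ZMod 8 → List A, V = flift inv 1 U →
      (V 1 ++ V 2 ++ V 3 ++ V 4 =
        wrev inv (U 6) ++ (U 8 ++ U 1 ++ U 2 ++ U 3 ++ U 4)) ∧
      (V 2 ++ V 3 ++ V 4 ++ V 5 =
        (U 2 ++ U 3 ++ U 4 ++ U 5 ++ U 6) ++ wrev inv (U 8)) ∧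
      (∀ S : List A, S ≠ [] → WBalanced inv S →
        (S <:+: (U 1 ++ U 2 ++ U 3 ++ U 4) ∨ S <:+: (U 2 ++ U 3 ++ U 4 ++ U 5)) →
        ∃ i : ZMod 8, S <:+: (V i ++ V (i + 1) ++ V (i + 2) ++ V (i + 3))) := by
  rintro V rfl
  have hleft : flift inv 1 U 1 ++ flift inv 1 U 2 ++ flift inv 1 U 3 ++ flift inv 1 U 4 =
      wrev inv (U 6) ++ (U 8 ++ U 1 ++ U 2 ++ U 3 ++ U 4) :=
    hU.flift_window_self 1
  have hright : flift inv 1 U 2 ++ flift inv 1 U 3 ++ flift inv 1 U 4 ++ flift inv 1 U 5 =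
      (U 2 ++ U 3 ++ U 4 ++ U 5 ++ U 6) ++ wrev inv (U 8) :=
    hU.flift_window_succ 1
  refine ⟨hleft, hright, fun S _ _ hS => ?_⟩
  rcases hS with hS | hS
  · refine ⟨1, ?_⟩
    rw [show (1 : ZMod 8) + 1 = 2 from rfl, show (1 : ZMod 8) + 2 = 3 from rfl,
      show (1 : ZMod 8) + 3 = 4 from rfl, hleft]
    exact hS.trans ⟨wrev inv (U 6) ++ U 8, [], by simp⟩
  · refine ⟨2, ?_⟩
    rw [show (2 : ZMod 8) + 1 = 3 from rfl, show (2 : ZMod 8) + 2 = 4 from rfl,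
      show (2 : ZMod 8) + 3 = 5 from rfl, hright]
    exact hS.trans ⟨[], U 6 ++ wrev inv (U 8), by simp⟩

theorem stmt15 {A : Type*} (inv : A → A) (hinv : Function.Involutive inv)
    (U : ZMod 8 → List A) (hU : IDC inv U) :
    ∀ V : ZMod 8 → List A, V = flift inv 1 U →
      (V 1 ++ V 2 ++ V 3 ++ V 4 =
        wrev inv (U 6) ++ (U 8 ++ U 1 ++ U 2 ++ U 3 ++ U 4)) ∧
      (V 2 ++ V 3 ++ V 4 ++ V 5 =
        (U 2 ++ U 3 ++ U 4 ++ U 5 ++ U 6) ++ wrev inv (U 8)) ∧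
      (∀ S : List A, S ≠ [] → WBalanced inv S →
        (S <:+: (U 1 ++ U 2 ++ U 3 ++ U 4) ∨ S <:+: (U 2 ++ U 3 ++ U 4 ++ U 5)) →
        ∃ i : ZMod 8, S <:+: (V i ++ V (i + 1) ++ V (i + 2) ++ V (i + 3))) :=
  stmt15_general inv U hU
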